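/- Let σ_x = [[0,1],[1,0]], σ_y = [[0,−i],[i,0]], σ_z = [[1,0],[0,−1]] be the Pauli matrices and I the identity in M_2. For c ∈ ℝ, the linear map T : M_2 → M_2 determined by T(I) = c·I, T(σ_x) = σ_y, T(σ_y) = σ_x, T(σ_z) = σ_z is completely positive if and only if c ≥ 3. In particular, there is no unital (T̃(I) = I) completely positive linear map T̃ : M_2 → M_2 with T̃(σ_x) = σ_y, T̃(σ_y) = σ_x and T̃(σ_z) = σ_z. -/

import Mathlib

open scoped Kronecker ComplexOrder Matrix.Norms.L2Operator
open Matrix Filter Classical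

/-- `M_d`, the algebra of `d × d` complex matrices. -/
abbrev Mat (d : ℕ) := Matrix (Fin d) (Fin d) ℂ

/-- A linear map `T : S → M_{d'}` on a subspace `S ⊆ M_d` is completely positive if for
every `n` and every positive semidefinite `P = Σ_j X_j ⊗ K_j` with `X_j ∈ S`, `K_j ∈ M_n`,
the matrix `(T ⊗ id_n)(P) = Σ_j T(X_j) ⊗ K_j` is positive semidefinite. -/
def IsCPOn {d d' : ℕ} (S : Submodule ℂ (Mat d)) (T : S →ₗ[ℂ] Mat d') : Prop :=
  ∀ (n m : ℕ) (X : Fin m → S) (K : Fin m → Matrix (Fin n) (Fin n) ℂ),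
    (∑ j, (X j : Mat d) ⊗ₖ K j).PosSemidef →
    (∑ j, (T (X j)) ⊗ₖ K j).PosSemidef

/-- Complete positivity for a linear map defined on all of `M_d`. -/
def IsCP {d d' : ℕ} (T : Mat d →ₗ[ℂ] Mat d') : Prop :=
  ∀ (n m : ℕ) (X : Fin m → Mat d) (K : Fin m → Matrix (Fin n) (Fin n) ℂ),
    (∑ j, X j ⊗ₖ K j).PosSemidef →
    (∑ j, T (X j) ⊗ₖ K j).PosSemidef

def matPsi0 : Mat 2 := !![1, 0; 0, 0]
def pauliX : Mat 2 := !![0, 1; 1, 0]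
def pauliY : Mat 2 := !![0, -Complex.I; Complex.I, 0]
def pauliZ : Mat 2 := !![1, 0; 0, -1]

/-!
The prescribed values on the Pauli basis determine the map entrywise. Its Choi matrix has
eigenvalues `(c+1)/2` (three times) and `(c-3)/2`, the latter with eigenvector `|01⟩ - i|10⟩`;
evaluating the Choi form there shows that complete positivity forces `c ≥ 3`. Conversely, the map
has a Kraus decomposition with weights `(c+1)/2, (c+1)/2, (c+1)/4, (c-3)/4`, all nonnegative
once `c ≥ 3`.
-/

namespace Matrix

theorem sum_kronecker {ι l m n p R : Type*} [Semiring R] (s : Finset ι)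
    (A : ι → Matrix l m R) (B : Matrix n p R) :
    (∑ i ∈ s, A i) ⊗ₖ B = ∑ i ∈ s, A i ⊗ₖ B := by
  ext ⟨i, k⟩ ⟨j, l⟩
  simp only [kroneckerMap_apply, Matrix.sum_apply, Finset.sum_mul]

theorem posSemidef_sum_single_kronecker_single {n : Type*} [Fintype n] [DecidableEq n] :
    (∑ p : n × n, single p.1 p.2 (1 : ℂ) ⊗ₖ single p.1 p.2 (1 : ℂ)).PosSemidef := by
  let ω : n × n → ℂ := fun q => if q.1 = q.2 then 1 else 0
  convert posSemidef_vecMulVec_self_star ω using 1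
  ext ⟨a, k⟩ ⟨b, l⟩
  by_cases a = k <;> by_cases b = l <;>
    simp [ω, vecMulVec_apply, Matrix.sum_apply, kroneckerMap_apply, single_apply,
      Fintype.sum_prod_type, ite_and, *] <;> grind

end Matrix

def choiMatrix {d d' : ℕ} (T : Mat d →ₗ[ℂ] Mat d') :
    Matrix (Fin d' × Fin d) (Fin d' × Fin d) ℂ :=
  ∑ p : Fin d × Fin d, T (single p.1 p.2 1) ⊗ₖ single p.1 p.2 1

namespace IsCP

variable {d d' : ℕ} {T : Mat d →ₗ[ℂ] Mat d'}

theorem posSemidef_sum_kronecker (hT : IsCP T) {ι : Type*} [Fintype ι] {n : ℕ}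
    (X : ι → Mat d) (K : ι → Matrix (Fin n) (Fin n) ℂ) (hP : (∑ i, X i ⊗ₖ K i).PosSemidef) :
    (∑ i, T (X i) ⊗ₖ K i).PosSemidef := by
  let e := (Fintype.equivFin ι).symm
  have h := hT n _ (X ∘ e) (K ∘ e)
  simp only [Function.comp_apply, e.sum_comp (fun i => X i ⊗ₖ K i),
    e.sum_comp (fun i => T (X i) ⊗ₖ K i)] at h
  exact h hP

theorem choiMatrix_posSemidef (hT : IsCP T) : (choiMatrix T).PosSemidef :=
  hT.posSemidef_sum_kronecker _ _ posSemidef_sum_single_kronecker_single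

theorem of_kraus {ι : Type*} [Fintype ι] (w : ι → ℝ) (hw : ∀ i, 0 ≤ w i)
    (A : ι → Matrix (Fin d') (Fin d) ℂ) (hkraus : ∀ M, T M = ∑ i, w i • (A i * M * (A i)ᴴ)) :
    IsCP T := by
  intro n m X K hP
  have conj_kronecker : ∀ i j, (A i ⊗ₖ (1 : Matrix (Fin n) (Fin n) ℂ)) * (X j ⊗ₖ K j)
      * (A i ⊗ₖ (1 : Matrix (Fin n) (Fin n) ℂ))ᴴ = (A i * X j * (A i)ᴴ) ⊗ₖ K j := by
    intro i j
    rw [conjTranspose_kronecker, conjTranspose_one, ← mul_kronecker_mul, ← mul_kronecker_mul,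
      one_mul, mul_one]
  have h : ∑ j, T (X j) ⊗ₖ K j = ∑ i, w i • ((A i ⊗ₖ (1 : Matrix (Fin n) (Fin n) ℂ))
      * (∑ j, X j ⊗ₖ K j) * (A i ⊗ₖ (1 : Matrix (Fin n) (Fin n) ℂ))ᴴ) := by
    simp_rw [Matrix.mul_sum, Matrix.sum_mul, conj_kronecker, Finset.smul_sum, hkraus,
      Matrix.sum_kronecker, smul_kronecker]
    exact Finset.sum_comm
  rw [h]
  exact posSemidef_sum _ fun i _ => (hP.mul_mul_conjTranspose_same _).smul (hw i)

end IsCP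

theorem mat2_eq_pauli_combination (M : Mat 2) :
    M = ((M 0 0 + M 1 1) / 2) • (1 : Mat 2) + ((M 0 1 + M 1 0) / 2) • pauliX
      + (Complex.I * (M 0 1 - M 1 0) / 2) • pauliY + ((M 0 0 - M 1 1) / 2) • pauliZ := by
  ext i j
  fin_cases i <;> fin_cases j <;> simp [pauliX, pauliY, pauliZ] <;> ring_nf <;> simp <;> ring

noncomputable def pauliSwap (c : ℝ) : Mat 2 →ₗ[ℂ] Mat 2 where
  toFun M := !![((c + 1) * M 0 0 + (c - 1) * M 1 1) / 2, -Complex.I * M 1 0;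
                Complex.I * M 0 1, ((c - 1) * M 0 0 + (c + 1) * M 1 1) / 2]
  map_add' M N := by ext i j; fin_cases i <;> fin_cases j <;> simp <;> ring
  map_smul' a M := by ext i j; fin_cases i <;> fin_cases j <;> simp <;> ring

theorem eq_pauliSwap {c : ℝ} {T : Mat 2 →ₗ[ℂ] Mat 2} (h1 : T 1 = (c : ℂ) • (1 : Mat 2))
    (hx : T pauliX = pauliY) (hy : T pauliY = pauliX) (hz : T pauliZ = pauliZ) :
    T = pauliSwap c := by
  ext1 M
  conv_lhs => rw [mat2_eq_pauli_combination M]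
  simp only [map_add, map_smul, h1, hx, hy, hz]
  ext i j
  fin_cases i <;> fin_cases j <;> simp [pauliSwap, pauliX, pauliY, pauliZ] <;> ring_nf

noncomputable def pauliSwapKrausWeight (c : ℝ) : Fin 4 → ℝ :=
  ![(c + 1) / 2, (c + 1) / 2, (c + 1) / 4, (c - 3) / 4]

def pauliSwapKrausOp : Fin 4 → Mat 2 :=
  ![!![1, 0; 0, 0], !![0, 0; 0, 1], !![0, -Complex.I; 1, 0], !![0, Complex.I; 1, 0]]

theorem pauliSwap_eq_kraus (c : ℝ) (M : Mat 2) :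
    pauliSwap c M =
      ∑ i, pauliSwapKrausWeight c i • (pauliSwapKrausOp i * M * (pauliSwapKrausOp i)ᴴ) := by
  ext i j
  fin_cases i <;> fin_cases j <;>
    simp [pauliSwap, pauliSwapKrausWeight, pauliSwapKrausOp, Fin.sum_univ_four, vecMul,
      dotProduct, Fin.sum_univ_two, mul_apply] <;> ring_nf
  all_goals simp
  all_goals ring

theorem star_dotProduct_choiMatrix_pauliSwap_mulVec (c : ℝ) :
    let w : Fin 2 × Fin 2 → ℂ := fun p => !![0, 1; -Complex.I, 0] p.1 p.2
    star w ⬝ᵥ choiMatrix (pauliSwap c) *ᵥ w = c - 3 := by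
  simp [choiMatrix, pauliSwap, dotProduct, mulVec, Fintype.sum_prod_type, Matrix.sum_apply,
    kroneckerMap_apply, single_apply]
  ring_nf
  simp
  ring

theorem isCP_pauliSwap_iff (c : ℝ) : IsCP (pauliSwap c) ↔ 3 ≤ c := by
  constructor
  · intro hCP
    have h := hCP.choiMatrix_posSemidef.dotProduct_mulVec_nonneg
      (fun p => !![0, 1; -Complex.I, 0] p.1 p.2)
    rw [star_dotProduct_choiMatrix_pauliSwap_mulVec] at h
    norm_cast at h
    linarith
  · intro hc
    refine IsCP.of_kraus (pauliSwapKrausWeight c) (fun i => ?_) pauliSwapKrausOp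
      (pauliSwap_eq_kraus c)
    fin_cases i <;> simp [pauliSwapKrausWeight] <;> linarith

/-- The linear map on `M_2` determined by `I ↦ cI`, `σ_x ↦ σ_y`, `σ_y ↦ σ_x`, `σ_z ↦ σ_z`
is completely positive iff `c ≥ 3`; in particular no unital completely positive map swaps
`σ_x` and `σ_y` while fixing `σ_z`. -/
theorem stmt19 :
    (∀ (c : ℝ) (T : Mat 2 →ₗ[ℂ] Mat 2),
      T 1 = (c : ℂ) • (1 : Mat 2) → T pauliX = pauliY → T pauliY = pauliX →
      T pauliZ = pauliZ → (IsCP T ↔ 3 ≤ c)) ∧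
    ¬ ∃ T : Mat 2 →ₗ[ℂ] Mat 2, IsCP T ∧ T 1 = (1 : Mat 2) ∧
        T pauliX = pauliY ∧ T pauliY = pauliX ∧ T pauliZ = pauliZ := by
  refine ⟨fun c T h1 hx hy hz => by rw [eq_pauliSwap h1 hx hy hz, isCP_pauliSwap_iff], ?_⟩
  rintro ⟨T, hCP, h1, hx, hy, hz⟩
  rw [eq_pauliSwap (c := 1) (by simpa using h1) hx hy hz, isCP_pauliSwap_iff] at hCP
  norm_num at hCP
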